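/- arXiv:2507.14992 — 3 statements merged into one kernel-verified Lean document; each statement's English description precedes it below -/
import Mathlib

section
/- Let P₀, N ∈ S^n with P₀ + N positive definite, and let P ∈ S^n satisfy P ≥ P₀ and P + N positive definite. Then for every x ∈ ℝⁿ, |(P + N)⁻¹ P x|² ≤ 4 [ 1 + ‖(P₀ + N)⁻¹‖² ( ‖P₀ + N‖² + ‖P₀‖² ) ] |x|², where ‖·‖ denotes the operator norm and |·| the Euclidean norm. -/
open Matrix
open scoped Matrix.Norms.L2Operator
open scoped MatrixOrder

lemma eucl_sq {n : ℕ} (u : Fin n → ℝ) :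
    ‖(EuclideanSpace.equiv (Fin n) ℝ).symm u‖ ^ 2 = u ⬝ᵥ u := by
  rw [EuclideanSpace.norm_eq, Real.sq_sqrt (by positivity)]
  simp [dotProduct, Real.norm_eq_abs, sq_abs, pow_two]

lemma dot_mulVec_le {n : ℕ} (M : Matrix (Fin n) (Fin n) ℝ) (v : Fin n → ℝ) :
    (M *ᵥ v) ⬝ᵥ (M *ᵥ v) ≤ ‖M‖ ^ 2 * (v ⬝ᵥ v) := by
  have h := M.l2_opNorm_mulVec ((EuclideanSpace.equiv (Fin n) ℝ).symm v)
  have h2 := pow_le_pow_left₀ (norm_nonneg _) h 2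
  rw [mul_pow, eucl_sq, eucl_sq] at h2
  exact h2

lemma cs_dot {n : ℕ} (u v : Fin n → ℝ) : (u ⬝ᵥ v) ^ 2 ≤ (u ⬝ᵥ u) * (v ⬝ᵥ v) := by
  simpa [dotProduct, pow_two] using
    Finset.sum_mul_sq_le_sq_mul_sq Finset.univ u v

lemma dot_self_nonneg {n : ℕ} (u : Fin n → ℝ) : 0 ≤ u ⬝ᵥ u :=
  Finset.sum_nonneg fun i _ => mul_self_nonneg _

lemma herm_dot_swap {n : ℕ} {M : Matrix (Fin n) (Fin n) ℝ} (hM : M.IsHermitian)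
    (x y : Fin n → ℝ) : x ⬝ᵥ (M *ᵥ y) = (M *ᵥ x) ⬝ᵥ y := by
  have hMt : Mᵀ = M := by
    have := hM.eq
    rwa [Matrix.conjTranspose_eq_transpose_of_trivial] at this
  rw [Matrix.dotProduct_mulVec, ← hMt, Matrix.vecMul_transpose, hMt]

/-- key: `|(P+N)⁻¹ v| ≤ ‖(P₀+N)⁻¹‖ |v|`, uniformly in `P ≥ P₀`. -/
lemma key_bound {n : ℕ} {P₀ N P : Matrix (Fin n) (Fin n) ℝ}
    (hP₀N : (P₀ + N).PosDef) (hPP₀ : (P - P₀).PosSemidef) (hPN : (P + N).PosDef)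
    (v : Fin n → ℝ) :
    ((P + N)⁻¹ *ᵥ v) ⬝ᵥ ((P + N)⁻¹ *ᵥ v) ≤ ‖(P₀ + N)⁻¹‖ ^ 2 * (v ⬝ᵥ v) := by
  set A := P₀ + N with hA
  set c := ‖A⁻¹‖ with hc
  set w := (P + N)⁻¹ *ᵥ v with hw
  have hdet : IsUnit (P + N).det := hPN.det_pos.ne'.isUnit
  have hwv : (P + N) *ᵥ w = v := by
    rw [hw, Matrix.mulVec_mulVec, Matrix.mul_nonsing_inv _ hdet, Matrix.one_mulVec]
  -- step 1 : w ⬝ A w ≤ w ⬝ v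
  have h1 : w ⬝ᵥ (A *ᵥ w) ≤ w ⬝ᵥ v := by
    have h0 := hPP₀.dotProduct_mulVec_nonneg w
    simp only [star_trivial] at h0
    have hsub : P - P₀ = (P + N) - A := by rw [hA]; abel
    rw [hsub, Matrix.sub_mulVec, dotProduct_sub, hwv] at h0
    linarith
  -- square root of A
  obtain ⟨hApsd⟩ : Nonempty (PLift (A.PosSemidef)) := ⟨⟨hP₀N.posSemidef⟩⟩
  set S := CFC.sqrt A with hSdef
  have hSpsd := (CFC.sqrt_nonneg A).posSemidef
  rw [← hSdef] at hSpsd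
  have hSS : S * S = A := CFC.sqrt_mul_sqrt_self A hApsd.down.nonneg
  have hdetS : IsUnit S.det := by
    have hd : S.det * S.det = A.det := by rw [← Matrix.det_mul, hSS]
    have : A.det ≠ 0 := hP₀N.det_pos.ne'
    exact isUnit_iff_ne_zero.2 (fun h => this (by rw [← hd, h, mul_zero]))
  have hSAS : S * A⁻¹ * S = 1 := by
    rw [← hSS, Matrix.mul_inv_rev, ← Matrix.mul_assoc, Matrix.mul_assoc (S * S⁻¹),
      Matrix.mul_nonsing_inv _ hdetS, Matrix.nonsing_inv_mul _ hdetS, Matrix.mul_one]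
  set u := S *ᵥ w with hu
  have huu : u ⬝ᵥ u = w ⬝ᵥ (A *ᵥ w) := by
    rw [hu, herm_dot_swap hSpsd.1, Matrix.mulVec_mulVec, hSS, dotProduct_comm]
  have hwwu : w ⬝ᵥ w = u ⬝ᵥ (A⁻¹ *ᵥ u) := by
    rw [hu, ← herm_dot_swap hSpsd.1, Matrix.mulVec_mulVec, Matrix.mulVec_mulVec, hSAS, Matrix.one_mulVec]
  -- step 2 : w ⬝ w ≤ c * (w ⬝ A w)
  have h2 : w ⬝ᵥ w ≤ c * (w ⬝ᵥ (A *ᵥ w)) := by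
    have hcs := cs_dot u (A⁻¹ *ᵥ u)
    have hbd := dot_mulVec_le A⁻¹ u
    have hun : (0:ℝ) ≤ u ⬝ᵥ u := dot_self_nonneg u
    have hwn : (0:ℝ) ≤ w ⬝ᵥ w := dot_self_nonneg w
    have hcn : (0:ℝ) ≤ c := norm_nonneg _
    rw [hwwu, ← huu]
    nlinarith [mul_le_mul_of_nonneg_left hbd hun, sq_nonneg (u ⬝ᵥ (A⁻¹ *ᵥ u) + c * (u ⬝ᵥ u)),
      mul_nonneg hcn hun, sq_nonneg (u ⬝ᵥ (A⁻¹ *ᵥ u) - c * (u ⬝ᵥ u))]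
  -- combine with Cauchy-Schwarz
  have hcs := cs_dot w v
  have hwn : (0:ℝ) ≤ w ⬝ᵥ w := dot_self_nonneg w
  have hvn : (0:ℝ) ≤ v ⬝ᵥ v := dot_self_nonneg v
  have hcn : (0:ℝ) ≤ c := norm_nonneg _
  have ht : w ⬝ᵥ w ≤ c * (w ⬝ᵥ v) := le_trans h2 (mul_le_mul_of_nonneg_left h1 hcn)
  nlinarith [mul_self_le_mul_self hwn ht, mul_le_mul_of_nonneg_left hcs (sq_nonneg c),
    mul_nonneg (sq_nonneg c) hvn]

/-- Uniform bound `|(P+N)⁻¹ P x|² ≤ 4[1 + ‖(P₀+N)⁻¹‖²(‖P₀+N‖² + ‖P₀‖²)]|x|²`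
for all symmetric `P ≥ P₀` with `P + N` positive definite, where `‖·‖` is the (ℓ²) operator
norm and `|v|² = v ⬝ᵥ v` is the squared Euclidean norm. -/
theorem stmt_5 {n : ℕ} (P₀ N P : Matrix (Fin n) (Fin n) ℝ)
    (hP₀ : P₀.IsSymm) (hN : N.IsSymm) (hP : P.IsSymm)
    (hP₀N : (P₀ + N).PosDef) (hPP₀ : (P - P₀).PosSemidef) (hPN : (P + N).PosDef) :
    ∀ x : Fin n → ℝ,
      ((P + N)⁻¹ * P).mulVec x ⬝ᵥ ((P + N)⁻¹ * P).mulVec x ≤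
        4 * (1 + ‖(P₀ + N)⁻¹‖ ^ 2 * (‖P₀ + N‖ ^ 2 + ‖P₀‖ ^ 2)) * (x ⬝ᵥ x) := by
  intro x
  have hdet : IsUnit (P + N).det := hPN.det_pos.ne'.isUnit
  set c := ‖(P₀ + N)⁻¹‖ with hc
  set a := ‖P₀ + N‖ with ha
  set b := ‖P₀‖ with hb
  -- decomposition
  have hdecomp : (P + N)⁻¹ * P = 1 - (P + N)⁻¹ * (P₀ + N) + (P + N)⁻¹ * P₀ := by
    have h1 : (P + N)⁻¹ * (P + N) = 1 := Matrix.nonsing_inv_mul _ hdet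
    rw [← h1]
    noncomm_ring
  set y₁ := (P + N)⁻¹ *ᵥ ((P₀ + N) *ᵥ x) with hy1
  set y₂ := (P + N)⁻¹ *ᵥ (P₀ *ᵥ x) with hy2
  have hy : ((P + N)⁻¹ * P) *ᵥ x = x - y₁ + y₂ := by
    rw [hdecomp, Matrix.add_mulVec, Matrix.sub_mulVec, Matrix.one_mulVec, hy1, hy2,
      Matrix.mulVec_mulVec, Matrix.mulVec_mulVec]
  -- bounds
  have hb1 : y₁ ⬝ᵥ y₁ ≤ c ^ 2 * (a ^ 2 * (x ⬝ᵥ x)) := by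
    calc y₁ ⬝ᵥ y₁ ≤ c ^ 2 * (((P₀ + N) *ᵥ x) ⬝ᵥ ((P₀ + N) *ᵥ x)) :=
          key_bound hP₀N hPP₀ hPN _
      _ ≤ c ^ 2 * (a ^ 2 * (x ⬝ᵥ x)) :=
          mul_le_mul_of_nonneg_left (dot_mulVec_le _ _) (sq_nonneg c)
  have hb2 : y₂ ⬝ᵥ y₂ ≤ c ^ 2 * (b ^ 2 * (x ⬝ᵥ x)) := by
    calc y₂ ⬝ᵥ y₂ ≤ c ^ 2 * ((P₀ *ᵥ x) ⬝ᵥ (P₀ *ᵥ x)) := key_bound hP₀N hPP₀ hPN _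
      _ ≤ c ^ 2 * (b ^ 2 * (x ⬝ᵥ x)) :=
          mul_le_mul_of_nonneg_left (dot_mulVec_le _ _) (sq_nonneg c)
  rw [hy]
  have hexp : (x - y₁ + y₂) ⬝ᵥ (x - y₁ + y₂) =
      x ⬝ᵥ x + y₁ ⬝ᵥ y₁ + y₂ ⬝ᵥ y₂ - 2 * (x ⬝ᵥ y₁) + 2 * (x ⬝ᵥ y₂) - 2 * (y₁ ⬝ᵥ y₂) := by
    simp only [add_dotProduct, dotProduct_add, sub_dotProduct,
      dotProduct_sub]
    rw [dotProduct_comm y₁ x, dotProduct_comm y₂ x, dotProduct_comm y₂ y₁]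
    ring
  rw [hexp]
  have e1 : (0:ℝ) ≤ x ⬝ᵥ x + 2 * (x ⬝ᵥ y₁) + y₁ ⬝ᵥ y₁ := by
    have h := dot_self_nonneg (x + y₁)
    simp only [add_dotProduct, dotProduct_add] at h
    rw [dotProduct_comm y₁ x] at h
    linarith
  have e2 : (0:ℝ) ≤ x ⬝ᵥ x - 2 * (x ⬝ᵥ y₂) + y₂ ⬝ᵥ y₂ := by
    have h := dot_self_nonneg (x - y₂)
    simp only [sub_dotProduct, dotProduct_sub] at h
    rw [dotProduct_comm y₂ x] at h
    linarith
  have e3 : (0:ℝ) ≤ y₁ ⬝ᵥ y₁ + 2 * (y₁ ⬝ᵥ y₂) + y₂ ⬝ᵥ y₂ := by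
    have h := dot_self_nonneg (y₁ + y₂)
    simp only [add_dotProduct, dotProduct_add] at h
    rw [dotProduct_comm y₂ y₁] at h
    linarith
  have nx := dot_self_nonneg x
  nlinarith [mul_nonneg (mul_nonneg (sq_nonneg c) (sq_nonneg a)) nx,
    mul_nonneg (mul_nonneg (sq_nonneg c) (sq_nonneg b)) nx]
end

section
/- Let Γ, Γ̃, N₂, S₂, C₂ ∈ ℝ^{n×n}, set Δ = Γ − Γ̃, 𝒩_Γ = I + Γ N₂, 𝒩_{Γ̃} = I + Γ̃ N₂, 𝒞_Γ = C₂ + Γ S₂ᵀ, 𝒞_{Γ̃} = C₂ + Γ̃ S₂ᵀ, and assume 𝒩_Γ and 𝒩_{Γ̃} are invertible. Then 𝒞_{Γ̃} [ 𝒩_Γ⁻¹ Γ 𝒞_Γᵀ − 𝒩_{Γ̃}⁻¹ Γ̃ 𝒞_{Γ̃}ᵀ ] = − 𝒞_{Γ̃} 𝒩_Γ⁻¹ Δ N₂ 𝒩_{Γ̃}⁻¹ Γ 𝒞_Γᵀ + 𝒞_{Γ̃} 𝒩_{Γ̃}⁻¹ [ Δ 𝒞_Γᵀ + Γ̃ S₂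 Δ ]. -/
open Matrix

/-- Algebraic identity rewriting the difference of the Riccati-type nonlinear
terms linearly in `Δ = Γ - Γ̃`, with `𝒩_Γ = I + Γ N₂`, `𝒞_Γ = C₂ + Γ S₂ᵀ` (and similarly
for `Γ̃`), where `Γ, Γ̃` are symmetric and `𝒩_Γ, 𝒩_{Γ̃}` are invertible. -/
theorem stmt_12 {n : ℕ} (Γ Γt N₂ S₂ C₂ : Matrix (Fin n) (Fin n) ℝ)
    (hΓ : Γ.IsSymm) (hΓt : Γt.IsSymm)
    (hNΓ : IsUnit (1 + Γ * N₂)) (hNΓt : IsUnit (1 + Γt * N₂)) :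
    (C₂ + Γt * S₂ᵀ) *
        ((1 + Γ * N₂)⁻¹ * Γ * (C₂ + Γ * S₂ᵀ)ᵀ -
          (1 + Γt * N₂)⁻¹ * Γt * (C₂ + Γt * S₂ᵀ)ᵀ) =
      -((C₂ + Γt * S₂ᵀ) * (1 + Γ * N₂)⁻¹ * (Γ - Γt) * N₂ * (1 + Γt * N₂)⁻¹ * Γ *
          (C₂ + Γ * S₂ᵀ)ᵀ) +
        (C₂ + Γt * S₂ᵀ) * (1 + Γt * N₂)⁻¹ *
          ((Γ - Γt) * (C₂ + Γ * S₂ᵀ)ᵀ + Γt * S₂ * (Γ - Γt)) := by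
  have hdA : IsUnit (1 + Γ * N₂).det := (Matrix.isUnit_iff_isUnit_det _).mp hNΓ
  have hdB : IsUnit (1 + Γt * N₂).det := (Matrix.isUnit_iff_isUnit_det _).mp hNΓt
  have hA : (1 + Γ * N₂)⁻¹ * (1 + Γ * N₂) = 1 := Matrix.nonsing_inv_mul _ hdA
  have hB : (1 + Γt * N₂) * (1 + Γt * N₂)⁻¹ = 1 := Matrix.mul_nonsing_inv _ hdB
  -- resolvent identity
  have key : (1 + Γ * N₂)⁻¹ =
      (1 + Γt * N₂)⁻¹ - (1 + Γ * N₂)⁻¹ * (Γ - Γt) * N₂ * (1 + Γt * N₂)⁻¹ := by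
    have : (1 + Γ * N₂)⁻¹ * ((1 + Γt * N₂) - (1 + Γ * N₂)) * (1 + Γt * N₂)⁻¹ =
        (1 + Γ * N₂)⁻¹ - (1 + Γt * N₂)⁻¹ := by
      rw [Matrix.mul_sub, Matrix.sub_mul, Matrix.mul_assoc _ (1 + Γt * N₂), hB, hA,
        Matrix.mul_one, Matrix.one_mul]
    have h2 : (1 + Γ * N₂)⁻¹ * ((1 + Γt * N₂) - (1 + Γ * N₂)) * (1 + Γt * N₂)⁻¹ =
        -((1 + Γ * N₂)⁻¹ * (Γ - Γt) * N₂ * (1 + Γt * N₂)⁻¹) := by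
      have : (1 + Γt * N₂) - (1 + Γ * N₂) = -((Γ - Γt) * N₂) := by noncomm_ring
      rw [this]; noncomm_ring
    rw [h2] at this
    linear_combination (norm := noncomm_ring) -this
  have hC : (C₂ + Γt * S₂ᵀ)ᵀ = (C₂ + Γ * S₂ᵀ)ᵀ - S₂ * (Γ - Γt) := by
    rw [transpose_add, transpose_add, transpose_mul, transpose_mul, transpose_transpose,
      hΓ.eq, hΓt.eq]
    noncomm_ring
  rw [hC]
  nth_rewrite 1 [key]
  noncomm_ring
end

section
/- Let u ∈ L²(0,1;ℝ) and let y : [0,1] → ℝ be absolutely continuous with y'(t) = y(t) + u(t) a.e. and y(1) = 0. Then y(0)² + ∫₀¹ y(t)² dt ≤ ∫₀¹ u(t)² dt. Consequently, the functional J(u) := −y(0)² + ∫₀¹ (5 u(t)² − y(t)²) dt satisfies J(u) ≥ 4 ∫₀¹ u(t)² dt. -/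
open MeasureTheory intervalIntegral

lemma fubini_half_square (g : ℝ → ℝ) (hg : Integrable g (volume : Measure ℝ)) :
    ∫ t, (∫ s in Set.Iic t, g s) * g t = (∫ s, g s) ^ 2 / 2 := by
  set T := ∫ s, g s with hT
  set K : ℝ → ℝ := fun t => ∫ s in Set.Iic t, g s with hK
  have hprod : Integrable (fun p : ℝ × ℝ => g p.1 * g p.2) ((volume : Measure ℝ).prod volume) :=
    hg.mul_prod hg
  have hS : MeasurableSet {p : ℝ × ℝ | p.1 ≤ p.2} := measurableSet_le measurable_fst measurable_snd
  set f : ℝ × ℝ → ℝ := ({p : ℝ × ℝ | p.1 ≤ p.2}).indicator (fun p => g p.1 * g p.2) with hfdef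
  have hf : Integrable f ((volume : Measure ℝ).prod volume) := hprod.indicator hS
  have hinner1 : ∀ s : ℝ, (∫ t, f (s, t)) = g s * ∫ t in Set.Ici s, g t := by
    intro s
    have h1 : ∀ t, f (s, t) = (Set.Ici s).indicator (fun t => g s * g t) t := by
      intro t
      by_cases h : s ≤ t <;> simp [hfdef, Set.indicator, h]
    simp_rw [h1]
    rw [MeasureTheory.integral_indicator measurableSet_Ici, MeasureTheory.integral_const_mul]
  have hinner2 : ∀ t : ℝ, (∫ s, f (s, t)) = K t * g t := by
    intro t
    have h1 : ∀ s, f (s, t) = (Set.Iic t).indicator (fun s => g s * g t) s := by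
      intro s
      by_cases h : s ≤ t <;> simp [hfdef, Set.indicator, h]
    simp_rw [h1]
    rw [MeasureTheory.integral_indicator measurableSet_Iic, MeasureTheory.integral_mul_const]
  have hIci : ∀ s : ℝ, (∫ t in Set.Ici s, g t) = T - K s := by
    intro s
    have h0 : (∫ t in Set.Iic s, g t) + ∫ t in Set.Ioi s, g t = T :=
      integral_Iic_add_Ioi hg.integrableOn hg.integrableOn
    have h1 : (∫ t in Set.Ici s, g t) = ∫ t in Set.Ioi s, g t :=
      setIntegral_congr_set (MeasureTheory.Ioi_ae_eq_Ici (a := s)).symm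
    rw [h1]; linarith
  have hfub : (∫ s, g s * ∫ t in Set.Ici s, g t) = ∫ t, K t * g t := by
    rw [← funext hinner1, ← funext hinner2]
    rw [← integral_prod f hf, ← integral_prod_symm f hf]
  have hintA : Integrable (fun s => g s * ∫ t in Set.Ici s, g t) (volume : Measure ℝ) := by
    have := hf.integral_prod_left
    simpa [funext hinner1] using this
  have hintgT : Integrable (fun s => g s * T) (volume : Measure ℝ) := hg.mul_const T
  have hintgK : Integrable (fun s => g s * K s) (volume : Measure ℝ) := by
    have h1 : (fun s => g s * K s) = fun s => g s * T - g s * (∫ t in Set.Ici s, g t) := by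
      funext s; rw [hIci s]; ring
    rw [h1]; exact hintgT.sub hintA
  have hstep : (∫ s, g s * ∫ t in Set.Ici s, g t) = T * T - ∫ s, g s * K s := by
    have h1 : (fun s => g s * ∫ t in Set.Ici s, g t) = fun s => g s * T - g s * K s := by
      funext s; rw [hIci s]; ring
    rw [h1, integral_sub hintgT hintgK, MeasureTheory.integral_mul_const]
  have hcomm : (∫ s, g s * K s) = ∫ t, K t * g t := by
    simp_rw [mul_comm]
  have : (∫ t, K t * g t) = T * T - ∫ t, K t * g t := by
    linarith [hfub, hstep, hcomm]
  have h2 : (∫ t, K t * g t) = T ^ 2 / 2 := by nlinarith [this]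
  exact h2

/-- If `y` is (absolutely) continuous on `[0,1]` with
`y(t) = y(0) + ∫₀ᵗ (y(s) + u(s)) ds` and `y(1) = 0`, with `u` square-integrable, then
`y(0)² + ∫₀¹ y² ≤ ∫₀¹ u²`, and consequently the indefinite cost
`J(u) = -y(0)² + ∫₀¹ (5u² - y²)` satisfies `J(u) ≥ 4∫₀¹ u²`. -/
theorem stmt_15 (u y : ℝ → ℝ)
    (hu : IntervalIntegrable u volume 0 1)
    (hu2 : IntervalIntegrable (fun t => u t ^ 2) volume 0 1)
    (hy : ContinuousOn y (Set.Icc (0:ℝ) 1))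
    (hyeq : ∀ t ∈ Set.Icc (0:ℝ) 1, y t = y 0 + ∫ s in (0:ℝ)..t, (y s + u s))
    (hy1 : y 1 = 0) :
    y 0 ^ 2 + (∫ t in (0:ℝ)..1, y t ^ 2) ≤ ∫ t in (0:ℝ)..1, u t ^ 2 ∧
      4 * ∫ t in (0:ℝ)..1, u t ^ 2 ≤
        -(y 0 ^ 2) + ∫ t in (0:ℝ)..1, (5 * u t ^ 2 - y t ^ 2) := by
  have huIcc01 : Set.uIcc (0:ℝ) 1 = Set.Icc 0 1 := Set.uIcc_of_le zero_le_one
  set g : ℝ → ℝ := fun s => y s + u s with hgdef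
  have hyint : IntervalIntegrable y volume 0 1 :=
    ContinuousOn.intervalIntegrable (by rw [huIcc01]; exact hy)
  have hgint : IntervalIntegrable g volume 0 1 := hyint.add hu
  have hy2int : IntervalIntegrable (fun t => y t ^ 2) volume 0 1 :=
    ContinuousOn.intervalIntegrable (by rw [huIcc01]; exact hy.pow 2)
  have huIcc : IntegrableOn u (Set.Icc (0:ℝ) 1) volume :=
    (integrableOn_Icc_iff_integrableOn_Ioc).2 hu.1
  have hyuIoc : IntegrableOn (fun t => y t * u t) (Set.Ioc (0:ℝ) 1) volume :=
    (IntegrableOn.continuousOn_mul hy huIcc isCompact_Icc).mono_set Set.Ioc_subset_Icc_self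
  have hyuint : IntervalIntegrable (fun t => y t * u t) volume 0 1 :=
    ⟨hyuIoc, by rw [Set.Ioc_eq_empty (by norm_num)]; exact integrableOn_empty⟩
  -- the indicator extension of g
  set G : ℝ → ℝ := (Set.Ioc (0:ℝ) 1).indicator g with hGdef
  have hG : Integrable G (volume : Measure ℝ) :=
    (hgint.1).integrable_indicator measurableSet_Ioc
  have hTval : (∫ s, G s) = ∫ s in (0:ℝ)..1, g s := by
    rw [hGdef, MeasureTheory.integral_indicator measurableSet_Ioc,
      integral_of_le zero_le_one]
  have hKt : ∀ t ∈ Set.Icc (0:ℝ) 1, (∫ s in Set.Iic t, G s) = ∫ s in (0:ℝ)..t, g s := by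
    intro t ht
    rw [hGdef, MeasureTheory.setIntegral_indicator measurableSet_Ioc,
      integral_of_le ht.1]
    have hset : Set.Iic t ∩ Set.Ioc 0 1 = Set.Ioc 0 t := by
      ext x
      simp only [Set.mem_inter_iff, Set.mem_Iic, Set.mem_Ioc]
      constructor
      · rintro ⟨h1, h2, h3⟩; exact ⟨h2, h1⟩
      · rintro ⟨h1, h2⟩; exact ⟨h2, h1, h2.trans ht.2⟩
    rw [hset]
  have hkey := fubini_half_square G hG
  have hstep1 : (∫ t, (∫ s in Set.Iic t, G s) * G t)
      = ∫ t in Set.Ioc (0:ℝ) 1, (∫ s in (0:ℝ)..t, g s) * g t := by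
    have h1 : ∀ t, (∫ s in Set.Iic t, G s) * G t
        = (Set.Ioc (0:ℝ) 1).indicator (fun t => (∫ s in Set.Iic t, G s) * g t) t := by
      intro t
      by_cases h : t ∈ Set.Ioc (0:ℝ) 1 <;> simp [hGdef, Set.indicator, h]
    simp_rw [h1]
    rw [MeasureTheory.integral_indicator measurableSet_Ioc]
    refine setIntegral_congr_fun measurableSet_Ioc fun t ht => ?_
    rw [hKt t (Set.Ioc_subset_Icc_self ht)]
  -- main integral identity
  have hy0T : (∫ s in (0:ℝ)..1, g s) = -(y 0) := by
    have := hyeq 1 (by norm_num)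
    rw [hy1] at this
    linarith
  have hmain : ∫ t in Set.Ioc (0:ℝ) 1, (y t - y 0) * g t = (y 0) ^ 2 / 2 := by
    have h2 : ∫ t in Set.Ioc (0:ℝ) 1, (y t - y 0) * g t
        = ∫ t in Set.Ioc (0:ℝ) 1, (∫ s in (0:ℝ)..t, g s) * g t := by
      refine setIntegral_congr_fun measurableSet_Ioc fun t ht => ?_
      have := hyeq t (Set.Ioc_subset_Icc_self ht)
      have h3 : (∫ s in (0:ℝ)..t, g s) = y t - y 0 := by linarith [this]
      rw [h3]
    rw [h2, ← hstep1, hkey, hTval, hy0T]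
    ring
  -- expand the identity
  have hexp : (∫ t in Set.Ioc (0:ℝ) 1, (y t - y 0) * g t)
      = (∫ t in (0:ℝ)..1, y t ^ 2) + (∫ t in (0:ℝ)..1, y t * u t)
        - y 0 * ∫ t in (0:ℝ)..1, g t := by
    have h1 : ∀ t, (y t - y 0) * g t = (y t ^ 2 + y t * u t) - y 0 * g t := by
      intro t; simp only [hgdef]; ring
    simp_rw [h1]
    have hint1 : Integrable (fun t => y t ^ 2 + y t * u t)
        (volume.restrict (Set.Ioc (0:ℝ) 1)) := hy2int.1.add hyuIoc
    rw [MeasureTheory.integral_sub hint1 (hgint.1.const_mul (y 0)),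
      MeasureTheory.integral_add hy2int.1 hyuIoc, MeasureTheory.integral_const_mul,
      integral_of_le zero_le_one, integral_of_le zero_le_one, integral_of_le zero_le_one]
  have hid : (∫ t in (0:ℝ)..1, y t ^ 2) + (∫ t in (0:ℝ)..1, y t * u t) = -(y 0 ^ 2) / 2 := by
    rw [hexp, hy0T] at hmain
    linarith
  -- AM-GM inequality
  have hAM : (∫ t in (0:ℝ)..1, -(2 * (y t * u t))) ≤ ∫ t in (0:ℝ)..1, (y t ^ 2 + u t ^ 2) := by
    refine integral_mono_on zero_le_one ?_ (hy2int.add hu2) fun x _ => by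
      nlinarith [sq_nonneg (y x + u x)]
    have := (hyuint.const_mul (-2))
    simpa [neg_mul] using this
  rw [intervalIntegral.integral_add hy2int hu2] at hAM
  have hAM2 : -(2 * ∫ t in (0:ℝ)..1, y t * u t)
      ≤ (∫ t in (0:ℝ)..1, y t ^ 2) + ∫ t in (0:ℝ)..1, u t ^ 2 := by
    have h2 : (∫ t in (0:ℝ)..1, -(2 * (y t * u t))) = -(2 * ∫ t in (0:ℝ)..1, y t * u t) := by
      have := intervalIntegral.integral_const_mul (μ := volume) (a := (0:ℝ)) (b := 1)
        (-2 : ℝ) (fun t => y t * u t)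
      simp only [neg_mul] at this ⊢; exact this
    rw [h2] at hAM
    exact hAM
  have hpart1 : y 0 ^ 2 + (∫ t in (0:ℝ)..1, y t ^ 2) ≤ ∫ t in (0:ℝ)..1, u t ^ 2 := by
    linarith
  refine ⟨hpart1, ?_⟩
  have hsplit : (∫ t in (0:ℝ)..1, (5 * u t ^ 2 - y t ^ 2))
      = 5 * (∫ t in (0:ℝ)..1, u t ^ 2) - ∫ t in (0:ℝ)..1, y t ^ 2 := by
    rw [intervalIntegral.integral_sub (hu2.const_mul 5) hy2int,
      intervalIntegral.integral_const_mul]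
  rw [hsplit]
  linarith
end
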